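/- arXiv:2208.14310 — 2 statements merged into one kernel-verified Lean document; each statement's English description precedes it below -/
import Mathlib

section
/- Let ρ be a density matrix on ℂ^{d_A} ⊗ (ℂ^{d_B} ⊗ ℂ^{d_C}) (indexed by triples). Then negativity does not increase when subsystem C is discarded: the negativity of the partial trace tr_C ρ with respect to the bipartition A : B is at most the negativity of ρ with respect to the bipartition A : BC. -/
open scoped Matrix Kronecker ComplexOrder

noncomputable section

/-- Hermitian inner product on `n → ℂ` (conjugate-linear in the first argument). -/
def cinner {n : Type*} [Fintype n] (v w : n → ℂ) : ℂ :=
  ∑ i, (starRingEnd ℂ) (v i) * w i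

/-- Tensor (Kronecker) product of vectors. -/
def tensorVec {α β : Type*} (v : α → ℂ) (w : β → ℂ) : α × β → ℂ :=
  fun p => v p.1 * w p.2

/-- The projector `|v⟩⟨v|`. -/
def vecProj {n : Type*} (v : n → ℂ) : Matrix n n ℂ :=
  Matrix.of fun i j => v i * (starRingEnd ℂ) (v j)

/-- A density matrix: positive semidefinite with unit trace. -/
def IsDensityMatrix {n : Type*} [Fintype n] (ρ : Matrix n n ℂ) : Prop :=
  ρ.PosSemidef ∧ ρ.trace = 1

open Classical in
/-- Positive semidefinite square root (0 on non-PSD input). -/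
def msqrt {n : Type*} [Fintype n] [DecidableEq n] (ρ : Matrix n n ℂ) : Matrix n n ℂ :=
  if h : ρ.PosSemidef then
    (h.1.eigenvectorUnitary : Matrix n n ℂ) * Matrix.diagonal ((↑) ∘ Real.sqrt ∘ h.1.eigenvalues) *
      (star h.1.eigenvectorUnitary : Matrix n n ℂ)
  else 0

/-- Uhlmann root fidelity `F(ρ,σ) = tr √(√ρ σ √ρ)`. -/
def rootFidelity {n : Type*} [Fintype n] [DecidableEq n] (ρ σ : Matrix n n ℂ) : ℝ :=
  ((msqrt (msqrt ρ * σ * msqrt ρ)).trace).re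

/-- Partial trace over the second tensor factor. -/
def ptraceC {α γ : Type*} [Fintype γ] (ρ : Matrix (α × γ) (α × γ) ℂ) : Matrix α α ℂ :=
  Matrix.of fun i j => ∑ k, ρ (i, k) (j, k)

/-- Partial trace over the first tensor factor. -/
def ptraceA {α β : Type*} [Fintype α] (ρ : Matrix (α × β) (α × β) ℂ) : Matrix β β ℂ :=
  Matrix.of fun i j => ∑ k, ρ (k, i) (k, j)

/-- Partial transpose on the second tensor factor. -/
def ptB {α β : Type*} (ρ : Matrix (α × β) (α × β) ℂ) : Matrix (α × β) (α × β) ℂ :=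
  Matrix.of fun p q => ρ (p.1, q.2) (q.1, p.2)

open Classical in
/-- Negativity: the sum of the absolute values of the negative eigenvalues of
the partial transpose (0 if the partial transpose is not Hermitian). -/
def negativity {α β : Type*} [Fintype α] [Fintype β] [DecidableEq α] [DecidableEq β]
    (ρ : Matrix (α × β) (α × β) ℂ) : ℝ :=
  if h : (ptB ρ).IsHermitian then ∑ i, max 0 (- h.eigenvalues i) else 0

/-- A family of vectors is an orthonormal basis family (orthonormal, indexed by the
same finite type as the dimension, hence a basis). -/
def IsONB {n : Type*} [Fintype n] [DecidableEq n] (x : n → n → ℂ) : Prop :=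
  ∀ j k, cinner (x j) (x k) = if j = k then 1 else 0

/-- Separability: a finite convex combination of projectors onto product unit vectors. -/
def IsSeparableDM {α β : Type*} [Fintype α] [Fintype β]
    (ρ : Matrix (α × β) (α × β) ℂ) : Prop :=
  ∃ (m : ℕ) (p : Fin m → ℝ) (a : Fin m → α → ℂ) (b : Fin m → β → ℂ),
    (∀ j, 0 ≤ p j) ∧ (∑ j, p j = 1) ∧
    (∀ j, cinner (a j) (a j) = 1) ∧ (∀ j, cinner (b j) (b j) = 1) ∧
    ρ = ∑ j, (p j : ℂ) • vecProj (tensorVec (a j) (b j))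

/-- A maximally entangled state on `ℂ^d ⊗ ℂ^d`. -/
def IsMaxEnt {d : ℕ} (Ψ : Fin d × Fin d → ℂ) : Prop :=
  ∃ x y : Fin d → Fin d → ℂ, IsONB x ∧ IsONB y ∧
    Ψ = ((Real.sqrt d : ℂ)⁻¹) • ∑ j, tensorVec (x j) (y j)

/-- Partial trace over the third tensor factor of a tripartite system. -/
def ptraceC3 {α β γ : Type*} [Fintype γ] (ρ : Matrix (α × β × γ) (α × β × γ) ℂ) :
    Matrix (α × β) (α × β) ℂ :=
  Matrix.of fun p q => ∑ k, ρ (p.1, p.2, k) (q.1, q.2, k)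

/-!
The sum of the absolute values of the negative eigenvalues of a Hermitian matrix `H` is the
largest value of `-Re tr (Q H)` over effects `0 ≤ Q ≤ 1`: the bound comes from writing
`tr (Q H)` in an eigenbasis of `H`, and it is attained by the spectral projection onto the
negative eigenspace. Partial transposition on `B` commutes with tracing out `C`, and
`tr ((P ⊗ 1_C) H) = tr (P tr_C H)` with `P ⊗ 1_C` again an effect, so the optimal effect for
`tr_C ρ` is matched by an effect on the whole system.
-/

open Matrix
open scoped MatrixOrder

namespace Matrix

namespace IsHermitian

variable {𝕜 n : Type*} [RCLike 𝕜] [Fintype n] [DecidableEq n] {H : Matrix n n 𝕜}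

lemma trace_mul_eq_sum_diag_mul_eigenvalues (hH : H.IsHermitian) (Q : Matrix n n 𝕜) :
    (Q * H).trace = ∑ i,
      (star (hH.eigenvectorUnitary : Matrix n n 𝕜) * Q * hH.eigenvectorUnitary) i i *
        hH.eigenvalues i := by
  conv_lhs => rw [hH.spectral_theorem, Unitary.conjStarAlgAut_apply, ← mul_assoc, ← mul_assoc,
    trace_mul_cycle]
  simp [trace, mul_diagonal, ← mul_assoc]

lemma neg_re_trace_mul_le_sum_max_neg_eigenvalues (hH : H.IsHermitian) {Q : Matrix n n 𝕜}
    (hQ₀ : 0 ≤ Q) (hQ₁ : Q ≤ 1) :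
    -RCLike.re (Q * H).trace ≤ ∑ i, max 0 (-hH.eigenvalues i) := by
  set U : Matrix n n 𝕜 := (hH.eigenvectorUnitary : Matrix n n 𝕜)
  have hU : star U * U = 1 := Unitary.coe_star_mul_self _
  have h₀ : 0 ≤ star U * Q * U := by
    simpa using star_left_conjugate_le_conjugate hQ₀ U
  have h₁ : star U * Q * U ≤ 1 := by
    simpa [hU] using star_left_conjugate_le_conjugate hQ₁ U
  rw [hH.trace_mul_eq_sum_diag_mul_eigenvalues, map_sum, ← Finset.sum_neg_distrib]
  refine Finset.sum_le_sum fun i _ => ?_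
  have hd₀ : 0 ≤ RCLike.re ((star U * Q * U) i i) :=
    (RCLike.nonneg_iff.mp h₀.posSemidef.diag_nonneg).1
  have hd₁ : RCLike.re ((star U * Q * U) i i) ≤ 1 := by
    simpa using (RCLike.nonneg_iff.mp ((le_iff.mp h₁).diag_nonneg (i := i))).1
  rw [RCLike.re_mul_ofReal]
  nlinarith [le_max_left 0 (-hH.eigenvalues i), le_max_right 0 (-hH.eigenvalues i)]

lemma exists_neg_re_trace_mul_eq_sum_max_neg_eigenvalues (hH : H.IsHermitian) :
    ∃ Q : Matrix n n 𝕜, 0 ≤ Q ∧ Q ≤ 1 ∧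
      -RCLike.re (Q * H).trace = ∑ i, max 0 (-hH.eigenvalues i) := by
  set χ : ℝ → ℝ := fun x => if x < 0 then 1 else 0
  refine ⟨cfc χ H, cfc_nonneg fun x _ => by positivity, cfc_le_one _ _ fun x _ => ?_, ?_⟩
  · dsimp only [χ]
    split_ifs <;> norm_num
  · set U : Matrix n n 𝕜 := (hH.eigenvectorUnitary : Matrix n n 𝕜)
    set D : Matrix n n 𝕜 := diagonal (RCLike.ofReal ∘ χ ∘ hH.eigenvalues)
    have hU : star U * U = 1 := Unitary.coe_star_mul_self _
    have hD : star U * (U * D * star U) * U = D := by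
      simp only [← mul_assoc, hU, one_mul]
      simp only [mul_assoc, hU, mul_one]
    rw [hH.trace_mul_eq_sum_diag_mul_eigenvalues, cfc_eq hH, IsHermitian.cfc,
      Unitary.conjStarAlgAut_apply, hD, map_sum, ← Finset.sum_neg_distrib]
    refine Finset.sum_congr rfl fun i _ => ?_
    by_cases h : hH.eigenvalues i < 0 <;> simp [D, χ, h, le_of_lt, not_lt.mp]

lemma ptB {α β : Type*} {ρ : Matrix (α × β) (α × β) ℂ} (h : ρ.IsHermitian) :
    (ptB ρ).IsHermitian :=
  IsHermitian.ext fun p q => h.apply (p.1, q.2) (q.1, p.2)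

lemma ptraceC {α γ : Type*} [Fintype γ] {ρ : Matrix (α × γ) (α × γ) ℂ} (h : ρ.IsHermitian) :
    (ptraceC ρ).IsHermitian :=
  IsHermitian.ext fun i j => by simp [_root_.ptraceC, star_sum, h.apply]

end IsHermitian

lemma trace_submatrix_equiv {m n R : Type*} [Fintype m] [Fintype n] [AddCommMonoid R]
    (A : Matrix n n R) (e : m ≃ n) : (A.submatrix e e).trace = A.trace :=
  e.sum_comp A.diag

lemma kronecker_one_submatrix_mono {𝕜 m n γ : Type*} [RCLike 𝕜] [Fintype m] [Fintype n]
    [Fintype γ] [DecidableEq γ] (f : m → n × γ) :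
    Monotone fun P : Matrix n n 𝕜 => (P ⊗ₖ (1 : Matrix γ γ 𝕜)).submatrix f f := by
  intro P Q h
  have hsub : (Q ⊗ₖ (1 : Matrix γ γ 𝕜)).submatrix f f - (P ⊗ₖ (1 : Matrix γ γ 𝕜)).submatrix f f
      = ((Q - P) ⊗ₖ (1 : Matrix γ γ 𝕜)).submatrix f f := by
    ext
    simp [sub_mul]
  rw [le_iff, hsub]
  exact ((le_iff.mp h).kronecker PosSemidef.one).submatrix f

lemma trace_kronecker_one_mul {α γ : Type*} [Fintype α] [Fintype γ] [DecidableEq γ]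
    (P : Matrix α α ℂ) (H : Matrix (α × γ) (α × γ) ℂ) :
    ((P ⊗ₖ (1 : Matrix γ γ ℂ)) * H).trace = (P * ptraceC H).trace := by
  simp only [trace, diag_apply, mul_apply, kroneckerMap_apply, one_apply, mul_ite, mul_one,
    mul_zero, ite_mul, zero_mul, Fintype.sum_prod_type, Finset.sum_ite_eq, Finset.mem_univ,
    ↓reduceIte, ptraceC, of_apply, Finset.mul_sum]
  exact Finset.sum_congr rfl fun a _ => Finset.sum_comm

lemma trace_kronecker_one_submatrix_mul {α β γ : Type*} [Fintype α] [Fintype β] [Fintype γ]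
    [DecidableEq γ] (P : Matrix (α × β) (α × β) ℂ) (H : Matrix (α × β × γ) (α × β × γ) ℂ) :
    ((P ⊗ₖ (1 : Matrix γ γ ℂ)).submatrix (Equiv.prodAssoc α β γ).symm
      (Equiv.prodAssoc α β γ).symm * H).trace = (P * ptraceC3 H).trace := by
  set e := Equiv.prodAssoc α β γ
  calc _ = ((P ⊗ₖ (1 : Matrix γ γ ℂ)).submatrix e.symm e.symm *
        (H.submatrix e e).submatrix e.symm e.symm).trace := by simp
    _ = (P * ptraceC3 H).trace := by
      rw [submatrix_mul_equiv, trace_submatrix_equiv, trace_kronecker_one_mul]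
      rfl

end Matrix

lemma ptB_ptraceC3 {α β γ : Type*} [Fintype γ] (ρ : Matrix (α × β × γ) (α × β × γ) ℂ) :
    ptB (ptraceC3 ρ) = ptraceC3 (ptB ρ) :=
  rfl

/-- negativity does not increase when subsystem `C` is discarded:
`N_{A:B}(tr_C ρ) ≤ N_{A:BC}(ρ)`. -/
theorem negativity_ptrace_le (dA dB dC : ℕ)
    (ρ : Matrix (Fin dA × Fin dB × Fin dC) (Fin dA × Fin dB × Fin dC) ℂ)
    (hρ : IsDensityMatrix ρ) :
    negativity (ptraceC3 ρ) ≤ negativity ρ := by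
  set e := Equiv.prodAssoc (Fin dA) (Fin dB) (Fin dC)
  have hH : (ptB ρ).IsHermitian := hρ.1.1.ptB
  have hH₃ : (ptB (ptraceC3 ρ)).IsHermitian := (hH.submatrix e).ptraceC
  rw [negativity, dif_pos hH₃, negativity, dif_pos hH]
  obtain ⟨P, hP₀, hP₁, hP⟩ := hH₃.exists_neg_re_trace_mul_eq_sum_max_neg_eigenvalues
  have hlift := kronecker_one_submatrix_mono (𝕜 := ℂ) (γ := Fin dC) e.symm
  rw [← hP, ptB_ptraceC3, ← trace_kronecker_one_submatrix_mul]
  refine hH.neg_re_trace_mul_le_sum_max_neg_eigenvalues ?_ ?_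
  · simpa using hlift hP₀
  · simpa [one_kronecker_one, submatrix_one_equiv] using hlift hP₁

end
end

section
/- Let X, Y denote the Pauli matrices X = |0⟩⟨1| + |1⟩⟨0| and Y = −i|0⟩⟨1| + i|1⟩⟨0| on ℂ², and define M = (X ⊗ I ⊗ Y + I ⊗ Y ⊗ X)/√2 on ℂ² ⊗ ℂ² ⊗ ℂ². Then for every real t, exp(−itM)(e₀ ⊗ e₀ ⊗ e₀) = cos t · (e₀ ⊗ e₀ ⊗ e₀) + sin t · ((e₀ ⊗ e₁ + e₁ ⊗ e₀)/√2) ⊗ e₁. In particular, the first two qubits reach the maximally entangled Bell state (e₀⊗e₁ + e₁⊗e₀)/√2 only at t = π/2, twice the direct-interaction time arccos(1/√2) = π/4. -/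
open scoped Matrix Kronecker ComplexOrder

noncomputable section

/-- Standard basis vector `e₀` of `ℂ²`. -/
def qe0 : Fin 2 → ℂ := ![1, 0]

/-- Standard basis vector `e₁` of `ℂ²`. -/
def qe1 : Fin 2 → ℂ := ![0, 1]

/-- Pauli `X` matrix. -/
def pX : Matrix (Fin 2) (Fin 2) ℂ := !![0, 1; 1, 0]

/-- Pauli `Y` matrix. -/
def pY : Matrix (Fin 2) (Fin 2) ℂ := !![0, -Complex.I; Complex.I, 0]

/-- Pauli `Z` matrix. -/
def pZ : Matrix (Fin 2) (Fin 2) ℂ := !![1, 0; 0, -1]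

/-- The Hamiltonian `M = (X ⊗ I ⊗ Y + I ⊗ Y ⊗ X)/√2`. -/
def Mxy : Matrix ((Fin 2 × Fin 2) × Fin 2) ((Fin 2 × Fin 2) × Fin 2) ℂ :=
  (((Real.sqrt 2 : ℝ) : ℂ))⁻¹ •
    ((pX ⊗ₖ (1 : Matrix (Fin 2) (Fin 2) ℂ)) ⊗ₖ pY +
      ((1 : Matrix (Fin 2) (Fin 2) ℂ) ⊗ₖ pY) ⊗ₖ pX)

/-! `M` sends `|000⟩` to `i |ψ⁺⟩|1⟩` and `|ψ⁺⟩|1⟩` to `-i |000⟩`, so on the span of these two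
vectors it acts as a Pauli `Y`, with eigenvectors `|000⟩ ± i |ψ⁺⟩|1⟩` of eigenvalues `±1`.
Exponentiating on the eigenvectors and recombining with Euler's formulas gives
`cos t |000⟩ + sin t |ψ⁺⟩|1⟩`; at `t = π/2` only the second term survives, while
`cos (π/4) = 1/√2`. -/

open Complex Matrix

theorem tensorVec_add_left {α β : Type*} (v v' : α → ℂ) (w : β → ℂ) :
    tensorVec (v + v') w = tensorVec v w + tensorVec v' w := by
  funext p; simp [tensorVec, add_mul]

theorem tensorVec_smul_left {α β : Type*} (c : ℂ) (v : α → ℂ) (w : β → ℂ) :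
    tensorVec (c • v) w = c • tensorVec v w := by
  funext p; simp [tensorVec, mul_assoc]

theorem tensorVec_smul_right {α β : Type*} (c : ℂ) (v : α → ℂ) (w : β → ℂ) :
    tensorVec v (c • w) = c • tensorVec v w := by
  funext p; simp [tensorVec, mul_left_comm]

theorem Matrix.kronecker_mulVec_tensorVec {α β γ δ : Type*} [Fintype β] [Fintype δ]
    (A : Matrix α β ℂ) (B : Matrix γ δ ℂ) (v : β → ℂ) (w : δ → ℂ) :
    (A ⊗ₖ B) *ᵥ tensorVec v w = tensorVec (A *ᵥ v) (B *ᵥ w) := by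
  funext ⟨i, k⟩
  simp only [mulVec, dotProduct, tensorVec, kroneckerMap_apply, Fintype.sum_prod_type,
    Finset.sum_mul_sum]
  exact Finset.sum_congr rfl fun _ _ => Finset.sum_congr rfl fun _ _ => by ring

theorem Matrix.pow_mulVec_of_mulVec_eq_smul {m R : Type*} [Fintype m] [DecidableEq m]
    [CommSemiring R] {A : Matrix m m R} {u : m → R} {μ : R} (h : A *ᵥ u = μ • u) (n : ℕ) :
    A ^ n *ᵥ u = μ ^ n • u := by
  induction n with
  | zero => simp
  | succ n ih => rw [pow_succ', ← mulVec_mulVec, ih, mulVec_smul, h, smul_smul, pow_succ]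

theorem Matrix.exp_mulVec_of_mulVec_eq_smul {m : Type*} [Fintype m] [DecidableEq m]
    {A : Matrix m m ℂ} {u : m → ℂ} {μ : ℂ} (h : A *ᵥ u = μ • u) :
    NormedSpace.exp A *ᵥ u = NormedSpace.exp μ • u := by
  let _ : NormedRing (Matrix m m ℂ) := Matrix.linftyOpNormedRing
  let _ : NormedAlgebra ℂ (Matrix m m ℂ) := Matrix.linftyOpNormedAlgebra
  have hA := (NormedSpace.exp_series_hasSum_exp' (𝕂 := ℂ) A).map (mulVec.addMonoidHomLeft u)
    (continuous_id.matrix_mulVec continuous_const)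
  have hμ := (NormedSpace.exp_series_hasSum_exp' (𝕂 := ℂ) μ).smul_const u
  refine hA.unique (hμ.congr_fun fun n => ?_)
  simp [mulVec.addMonoidHomLeft, smul_mulVec, pow_mulVec_of_mulVec_eq_smul h, smul_smul]

theorem Matrix.exp_neg_I_mul_smul_mulVec {m : Type*} [Fintype m] [DecidableEq m]
    {A : Matrix m m ℂ} {v w : m → ℂ} (hv : A *ᵥ v = I • w) (hw : A *ᵥ w = -I • v) (z : ℂ) :
    NormedSpace.exp ((-(I * z)) • A) *ᵥ v = cos z • v + sin z • w := by
  have hplus : A *ᵥ (v + I • w) = v + I • w := by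
    rw [mulVec_add, mulVec_smul, hv, hw, smul_smul]
    simp [add_comm]
  have hminus : A *ᵥ (v - I • w) = -(v - I • w) := by
    rw [mulVec_sub, mulVec_smul, hv, hw, smul_smul]
    simp
  have hv_split : v = (2⁻¹ : ℂ) • ((v + I • w) + (v - I • w)) := by module
  calc NormedSpace.exp ((-(I * z)) • A) *ᵥ v
      = (2⁻¹ : ℂ) • (NormedSpace.exp (-(I * z)) • (v + I • w) +
          NormedSpace.exp (I * z) • (v - I • w)) := by
        conv_lhs => rw [hv_split]
        rw [mulVec_smul, mulVec_add,
          exp_mulVec_of_mulVec_eq_smul (by rw [smul_mulVec, hplus]),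
          exp_mulVec_of_mulVec_eq_smul (by rw [smul_mulVec, hminus, smul_neg, ← neg_smul, neg_neg])]
    _ = cos z • v + sin z • w := by
        rw [Complex.cos, Complex.sin, ← exp_eq_exp_ℂ, neg_mul, mul_comm z I]
        module

def bellPsiPlus : Fin 2 × Fin 2 → ℂ :=
  (((Real.sqrt 2 : ℝ) : ℂ))⁻¹ • (tensorVec qe0 qe1 + tensorVec qe1 qe0)

theorem pX_mulVec_qe0 : pX *ᵥ qe0 = qe1 := by
  ext i; fin_cases i <;> simp [pX, qe0, qe1]

theorem pX_mulVec_qe1 : pX *ᵥ qe1 = qe0 := by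
  ext i; fin_cases i <;> simp [pX, qe0, qe1]

theorem pY_mulVec_qe0 : pY *ᵥ qe0 = I • qe1 := by
  ext i; fin_cases i <;> simp [pY, qe0, qe1]

theorem pY_mulVec_qe1 : pY *ᵥ qe1 = -I • qe0 := by
  ext i; fin_cases i <;> simp [pY, qe0, qe1]

theorem Mxy_mulVec_qe000 :
    Mxy *ᵥ tensorVec (tensorVec qe0 qe0) qe0 = I • tensorVec bellPsiPlus qe1 := by
  simp only [Mxy, bellPsiPlus, smul_mulVec, add_mulVec, kronecker_mulVec_tensorVec, one_mulVec,
    pX_mulVec_qe0, pY_mulVec_qe0, tensorVec_add_left, tensorVec_smul_left, tensorVec_smul_right]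
  module

theorem Mxy_mulVec_bellPsiPlus_qe1 :
    Mxy *ᵥ tensorVec bellPsiPlus qe1 = -I • tensorVec (tensorVec qe0 qe0) qe0 := by
  have hsqrt : ((Real.sqrt 2 : ℝ) : ℂ) ^ 2 = 2 := by norm_cast; simp
  simp only [Mxy, bellPsiPlus, smul_mulVec, mulVec_smul, add_mulVec, mulVec_add,
    kronecker_mulVec_tensorVec, one_mulVec, pX_mulVec_qe0, pX_mulVec_qe1, pY_mulVec_qe0,
    pY_mulVec_qe1, tensorVec_add_left, tensorVec_smul_left, tensorVec_smul_right]
  match_scalars <;> field_simp <;> norm_num [hsqrt]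

/-- the mediated dynamics generated by `M` on `|000⟩` produces
`cos t |000⟩ + sin t |ψ⁺⟩|1⟩`, so the Bell state is reached only at `t = π/2`,
twice the direct-interaction time `arccos(1/√2) = π/4`. -/
theorem mediated_dynamics_xy :
    (∀ t : ℝ,
      NormedSpace.exp ((-(Complex.I * (t : ℂ))) • Mxy) *ᵥ
          tensorVec (tensorVec qe0 qe0) qe0 =
        ((Real.cos t : ℝ) : ℂ) • tensorVec (tensorVec qe0 qe0) qe0 +
          ((Real.sin t : ℝ) : ℂ) •
            tensorVec ((((Real.sqrt 2 : ℝ) : ℂ))⁻¹ •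
              (tensorVec qe0 qe1 + tensorVec qe1 qe0)) qe1) ∧
    NormedSpace.exp ((-(Complex.I * ((Real.pi / 2 : ℝ) : ℂ))) • Mxy) *ᵥ
        tensorVec (tensorVec qe0 qe0) qe0 =
      tensorVec ((((Real.sqrt 2 : ℝ) : ℂ))⁻¹ • (tensorVec qe0 qe1 + tensorVec qe1 qe0)) qe1 ∧
    Real.arccos (Real.sqrt 2)⁻¹ = Real.pi / 4 := by
  have evolution (t : ℝ) := by
    simpa only [← ofReal_cos, ← ofReal_sin, bellPsiPlus] using
      exp_neg_I_mul_smul_mulVec Mxy_mulVec_qe000 Mxy_mulVec_bellPsiPlus_qe1 t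
  refine ⟨evolution, ?_, ?_⟩
  · simpa using evolution (Real.pi / 2)
  · have hcos : (√2)⁻¹ = Real.cos (Real.pi / 4) := by
      rw [Real.cos_pi_div_four]; field_simp; simp
    rw [hcos, Real.arccos_cos (by positivity) (by linarith [Real.pi_pos])]
end
end
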